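/- For all unitaries U, V ∈ U(d^n), one has E_{h ∈ F_d^{2n}} |⟨∂_h U, ∂_h V⟩|² = ‖U*V‖_{P²}⁴, i.e., the average over h ∈ F_d^{2n} of |d^{−n} tr((W_h U W_h* U*)* (W_h V W_h* V*))|² equals E_{h₁,h₂ ∈ F_d^{2n}} d^{−n} tr(∂_{h₂}∂_{h₁}(U*V)). -/

import Mathlib

open Matrix Complex

namespace CH

variable (d n : ℕ) [NeZero d]

/-- Phase space `F_d^{2n}`, written as pairs `(u, v)` with `u, v ∈ F_d^n`. -/
abbrev PSpace := (Fin n → ZMod d) × (Fin n → ZMod d)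

/-- Linear maps on `ℂ^{F_d^n}`, as matrices. -/
abbrev Mat := Matrix (Fin n → ZMod d) (Fin n → ZMod d) ℂ

/-- `ω = e^{2πi/d}`. -/
noncomputable def omg : ℂ := Complex.exp (2 * Real.pi * Complex.I / d)

/-- `τ = (-1)^d e^{iπ/d}`. -/
noncomputable def tau : ℂ := (-1 : ℂ) ^ d * Complex.exp (Real.pi * Complex.I / d)

/-- `D = 2d` if `d = 2`, else `D = d`. -/
def Dd : ℕ := if d = 2 then 4 else d

/-- The translation operator `X^v`, with `X^v |u⟩ = |u + v⟩`. -/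
noncomputable def Xop (v : Fin n → ZMod d) : Mat d n :=
  Matrix.of fun u u' => if u = u' + v then 1 else 0

/-- The phase operator `Z^v`, with `Z^v |u⟩ = ω^{u·v} |u⟩`. -/
noncomputable def Zop (v : Fin n → ZMod d) : Mat d n :=
  Matrix.diagonal fun u => omg d ^ (∑ i, u i * v i : ZMod d).val

/-- The Weyl operator `W_{(u,v)} = τ^{-(|u₁v₁| + ⋯ + |uₙvₙ|)} Z^u X^v`. -/
noncomputable def Weyl (a : PSpace d n) : Mat d n :=
  tau d ^ (-(∑ i, ((a.1 i * a.2 i).val : ℤ))) • (Zop d n a.1 * Xop d n a.2)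

/-- Normalized trace inner product `⟨A,B⟩ = d^{-n} tr(A* B)`. -/
noncomputable def trInner (A B : Mat d n) : ℂ := ((d : ℂ) ^ n)⁻¹ * (Aᴴ * B).trace

/-- Normalized Frobenius norm `‖A‖₂ = ⟨A,A⟩^{1/2}`. -/
noncomputable def hsNorm (A : Mat d n) : ℝ := Real.sqrt (trInner d n A A).re

/-- Pauli derivative `∂_h U = W_h U W_h* U*`. -/
noncomputable def pderiv (h : PSpace d n) (U : Mat d n) : Mat d n :=
  Weyl d n h * U * (Weyl d n h)ᴴ * Uᴴ

/-- The quantity `‖U‖_{P^k}^{2^k} = E_{h₁,…,h_k} d^{-n} tr(∂_{h_k} ⋯ ∂_{h₁} U)`. -/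
noncomputable def pq : ℕ → Mat d n → ℂ
  | 0, U => ((d : ℂ) ^ n)⁻¹ * U.trace
  | (k+1), U => ((d : ℂ) ^ (2*n))⁻¹ * ∑ h : PSpace d n, pq k (pderiv d n h U)

/-- The `k`-th Pauli uniformity norm `‖U‖_{P^k}`, the `2^k`-th root of `pq k U`. -/
noncomputable def pnorm (k : ℕ) (U : Mat d n) : ℝ := (pq d n k U).re ^ (((2:ℝ) ^ k)⁻¹)

/-- The Pauli group `C^{(1)} = {τ^p W_h : p ∈ Z_D, h ∈ F_d^{2n}}`. -/
def pauliGroup : Set (Mat d n) :=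
  {U | ∃ (p : ℕ) (h : PSpace d n), U = tau d ^ p • Weyl d n h}

/-- The Clifford hierarchy. -/
def cliff : ℕ → Set (Mat d n)
  | 0 => {U | ∃ θ : ℝ, U = Complex.exp (θ * Complex.I) • (1 : Mat d n)}
  | 1 => pauliGroup d n
  | (k+2) => {U | U ∈ unitary (Mat d n) ∧
      ∀ P ∈ pauliGroup d n, U * P * Uᴴ ∈ cliff (k+1)}

/-- Pauli polynomials of degree at most `k`. -/
def ppoly : ℕ → Set (Mat d n)
  | 0 => {U | ∃ θ : ℝ, U = Complex.exp (θ * Complex.I) • (1 : Mat d n)}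
  | (k+1) => {U | U ∈ unitary (Mat d n) ∧ ∀ h : PSpace d n, pderiv d n h U ∈ ppoly k}

/-- Symplectic form `[(u,v),(u',v')] = u·v' - u'·v` on `F_d^{2n}`. -/
def symp (a b : PSpace d n) : ZMod d :=
  (∑ i, a.1 i * b.2 i) - (∑ i, b.1 i * a.2 i)

/-- Multiplication of the Heisenberg group. -/
def heisMul (β : PSpace d n → PSpace d n → ZMod (Dd d))
    (x y : ZMod (Dd d) × PSpace d n) : ZMod (Dd d) × PSpace d n :=
  (x.1 + y.1 + β x.2 y.2, x.2 + y.2)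

/-! Twirling over phase space projects onto the identity: the phases `ω^{(a - b)·u}` cancel
off the diagonal, so `∑_h W_h M W_h* = d^n tr(M) • 1`. Hence every matrix `B` satisfies
`E_h d^{-n} tr(∂_h B) = |d^{-n} tr B|²`.
Since `W_h` is unitary, cyclicity of the trace gives `tr((∂_h U)* ∂_h V) = tr(∂_h (U* V))`, so
`|⟨∂_h U, ∂_h V⟩|²` is the first Pauli quantity of `∂_h (U* V)`, and averaging over `h` gives the
second one of `U* V`. -/

open ZMod (stdAddChar)

section Characters

variable {d}

lemma omg_pow_val (t : ZMod d) : omg d ^ t.val = stdAddChar t := by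
  rw [ZMod.stdAddChar_apply, ZMod.toCircle_apply, omg, ← Complex.exp_nat_mul]
  congr 1
  ring

lemma sum_stdAddChar_dotProduct {ι : Type*} [Fintype ι] [DecidableEq ι] (w : ι → ZMod d) :
    ∑ u : ι → ZMod d, stdAddChar (w ⬝ᵥ u) = if w = 0 then (d : ℂ) ^ Fintype.card ι else 0 := by
  let χ : AddChar (ι → ZMod d) ℂ :=
    { toFun := fun u => stdAddChar (w ⬝ᵥ u)
      map_zero_eq_one' := by simp
      map_add_eq_mul' := fun u v => by simp only [dotProduct_add, AddChar.map_add_eq_mul] }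
  have hχ : χ = 0 ↔ w = 0 := by
    refine ⟨fun h => funext fun i => ZMod.injective_stdAddChar ?_, fun h => ?_⟩
    · simpa [χ, AddChar.map_zero_eq_one] using AddChar.eq_zero_iff.mp h (Pi.single i 1)
    · ext u
      simp [χ, h]
  change ∑ u, χ u = _
  rw [AddChar.sum_eq_ite, Fintype.card_fun, ZMod.card]
  simp only [hχ, Nat.cast_pow]

end Characters

lemma norm_tau (d : ℕ) : ‖tau d‖ = 1 := by
  rw [tau, norm_mul, norm_pow, norm_neg, norm_one, one_pow, one_mul,
    show (Real.pi : ℂ) * Complex.I / d = ((Real.pi / d : ℝ) : ℂ) * Complex.I by push_cast; ring,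
    Complex.norm_exp_ofReal_mul_I]

lemma tau_zpow_mul_conj (d : ℕ) (k : ℤ) : tau d ^ k * starRingEnd ℂ (tau d ^ k) = 1 := by
  rw [Complex.mul_conj', norm_zpow, norm_tau, _root_.one_zpow, Complex.ofReal_one, one_pow]

section WeylOperators

variable {d n}

lemma Zop_eq_diagonal (v : Fin n → ZMod d) :
    Zop d n v = diagonal fun u => stdAddChar (u ⬝ᵥ v) := by
  simp only [Zop, omg_pow_val]
  rfl

lemma Xop_mul_apply (v : Fin n → ZMod d) (M : Mat d n) (a b : Fin n → ZMod d) :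
    (Xop d n v * M) a b = M (a - v) b := by
  rw [Matrix.mul_apply, Finset.sum_eq_single (a - v)] <;>
    simp +contextual [Xop, eq_sub_iff_add_eq, eq_comm]

lemma mul_Xop_conjTranspose_apply (v : Fin n → ZMod d) (M : Mat d n) (a b : Fin n → ZMod d) :
    (M * (Xop d n v)ᴴ) a b = M a (b - v) := by
  rw [Matrix.mul_apply, Finset.sum_eq_single (b - v)] <;>
    simp +contextual [Xop, eq_sub_iff_add_eq, eq_comm]

lemma Zop_mul_mul_conjTranspose_apply (u : Fin n → ZMod d) (M : Mat d n) (a b : Fin n → ZMod d) :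
    (Zop d n u * M * (Zop d n u)ᴴ) a b = stdAddChar ((a - b) ⬝ᵥ u) * M a b := by
  rw [Zop_eq_diagonal, diagonal_conjTranspose, mul_diagonal, diagonal_mul, Pi.star_apply,
    Complex.star_def, sub_dotProduct, AddChar.map_sub_eq_div, div_eq_mul_inv, AddChar.inv_apply_eq_conj]
  ring

lemma Weyl_mul_mul_conjTranspose_apply (h : PSpace d n) (M : Mat d n) (a b : Fin n → ZMod d) :
    (Weyl d n h * M * (Weyl d n h)ᴴ) a b =
      stdAddChar ((a - b) ⬝ᵥ h.1) * M (a - h.2) (b - h.2) := by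
  rw [Weyl, conjTranspose_smul, Matrix.smul_mul, Matrix.smul_mul, Matrix.mul_smul, smul_smul,
    Complex.star_def, tau_zpow_mul_conj, one_smul, conjTranspose_mul, ← mul_assoc, mul_assoc _ M,
    mul_assoc (Zop d n h.1), Zop_mul_mul_conjTranspose_apply, ← mul_assoc,
    mul_Xop_conjTranspose_apply, Xop_mul_apply]

lemma Weyl_mem_unitary (h : PSpace d n) : Weyl d n h ∈ unitary (Mat d n) := by
  rw [← Matrix.unitaryGroup, mem_unitaryGroup_iff, star_eq_conjTranspose]
  ext a b
  have := Weyl_mul_mul_conjTranspose_apply h 1 a b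
  rw [Matrix.mul_one] at this
  simp only [this, one_apply, sub_left_inj]
  split_ifs with hab
  · rw [hab, sub_self, zero_dotProduct, AddChar.map_zero_eq_one, mul_one]
  · rw [mul_zero]

lemma sum_Weyl_mul_mul_conjTranspose (M : Mat d n) :
    ∑ h : PSpace d n, Weyl d n h * M * (Weyl d n h)ᴴ =
      ((d : ℂ) ^ n * M.trace) • (1 : Mat d n) := by
  ext a b
  simp only [Matrix.sum_apply, Weyl_mul_mul_conjTranspose_apply, Fintype.sum_prod_type,
    ← Finset.sum_mul_sum, sum_stdAddChar_dotProduct, sub_eq_zero, Fintype.card_fin,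
    Matrix.smul_apply, one_apply, smul_eq_mul]
  split_ifs with hab
  · subst hab
    rw [mul_one, trace]
    exact congrArg _ (Fintype.sum_equiv (Equiv.subLeft a) _ _ fun v => by simp)
  · rw [zero_mul, mul_zero]

lemma trace_pderiv_conjTranspose_mul_pderiv (h : PSpace d n) (U V : Mat d n) :
    ((pderiv d n h U)ᴴ * pderiv d n h V).trace = (pderiv d n h (Uᴴ * V)).trace := by
  have hW : (Weyl d n h)ᴴ * Weyl d n h = 1 := Unitary.star_mul_self_of_mem (Weyl_mem_unitary h)
  simp only [pderiv, conjTranspose_mul, conjTranspose_conjTranspose, Matrix.mul_assoc]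
  rw [← Matrix.mul_assoc (Weyl d n h)ᴴ, hW, Matrix.one_mul, trace_mul_comm]
  simp only [Matrix.mul_assoc]

lemma pq_one (B : Mat d n) : pq d n 1 B = (‖pq d n 0 B‖ : ℂ) ^ 2 := by
  have hd : (d : ℂ) ≠ 0 := Nat.cast_ne_zero.mpr (NeZero.ne d)
  simp only [pq, pderiv, ← Finset.mul_sum, ← trace_sum, ← Finset.sum_mul,
    sum_Weyl_mul_mul_conjTranspose, Matrix.smul_mul, Matrix.one_mul, trace_smul, smul_eq_mul,
    trace_conjTranspose, Complex.star_def]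
  rw [← Complex.mul_conj', map_mul, map_inv₀, map_pow, Complex.conj_natCast]
  field_simp
  ring

end WeylOperators

theorem stmt16_general (d n : ℕ) [NeZero d]
    (U V : Mat d n) :
    ((d : ℂ) ^ (2 * n))⁻¹ *
        ∑ h : PSpace d n,
          ((‖trInner d n (pderiv d n h U) (pderiv d n h V)‖ ^ 2 : ℝ) : ℂ)
      = pq d n 2 (Uᴴ * V) := by
  have hinner (h : PSpace d n) :
      trInner d n (pderiv d n h U) (pderiv d n h V) = pq d n 0 (pderiv d n h (Uᴴ * V)) := by
    rw [trInner, trace_pderiv_conjTranspose_mul_pderiv, pq]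
  rw [pq]
  simp only [hinner, pq_one, Complex.ofReal_pow]

theorem stmt16 (d n : ℕ) [NeZero d] (hd : d.Prime) (hn : 1 ≤ n)
    (U V : Mat d n) (hU : U ∈ unitary (Mat d n)) (hV : V ∈ unitary (Mat d n)) :
    ((d : ℂ) ^ (2 * n))⁻¹ *
        ∑ h : PSpace d n,
          ((‖trInner d n (pderiv d n h U) (pderiv d n h V)‖ ^ 2 : ℝ) : ℂ)
      = pq d n 2 (Uᴴ * V) :=
  stmt16_general d n U V

end CH
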